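/- Let f be a real homogeneous polynomial of degree d ≥ 2 in n variables, K ⊆ ℝ^n a proper convex cone, a a point in the interior of K, and v a vector spanning an extreme ray of K. If D_a f and D_v f are both K-completely log-concave, then D_{a+v} f is K-completely log-concave. -/

import Mathlib

open Matrix

/-- The number of positive eigenvalues (with multiplicity) of a real symmetric matrix. -/
noncomputable def posEigCount {n : ℕ} (Q : Matrix (Fin n) (Fin n) ℝ) : ℕ :=
  @dite _ Q.IsHermitian (Classical.dec _)
    (fun h => (Finset.univ.filter fun i => 0 < h.eigenvalues i).card)
    (fun _ => 0)

/-- A proper convex cone: a closed convex cone that is pointed and solid. -/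
def IsProperCone {n : ℕ} (K : Set (Fin n → ℝ)) : Prop :=
  Convex ℝ K ∧ (∀ c : ℝ, 0 ≤ c → ∀ x ∈ K, c • x ∈ K) ∧
    IsClosed K ∧ K ∩ (-K) = {0} ∧ (interior K).Nonempty

/-- The dual cone of `K` with respect to the standard inner product. -/
def dualConeSet {n : ℕ} (K : Set (Fin n → ℝ)) : Set (Fin n → ℝ) :=
  {y | ∀ x ∈ K, 0 ≤ y ⬝ᵥ x}

/-- The quadratic form with symmetric matrix `Q` is `K`-Lorentzian: `Q` has exactly one
positive eigenvalue and `yᵀQx > 0` for all `x, y` in the interior of `K`. -/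
def IsLorentzianMatrix {n : ℕ} (K : Set (Fin n → ℝ)) (Q : Matrix (Fin n) (Fin n) ℝ) : Prop :=
  posEigCount Q = 1 ∧ ∀ x ∈ interior K, ∀ y ∈ interior K, 0 < y ⬝ᵥ (Q *ᵥ x)

/-- A nonzero `v ∈ K` spans an extreme ray of `K`. -/
def SpansExtremeRay {n : ℕ} (K : Set (Fin n → ℝ)) (v : Fin n → ℝ) : Prop :=
  v ∈ K ∧ v ≠ 0 ∧ ∀ x ∈ K, ∀ y ∈ K, v = x + y →
    (∃ c : ℝ, 0 ≤ c ∧ x = c • v) ∧ (∃ c : ℝ, 0 ≤ c ∧ y = c • v)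

open MvPolynomial

/-- Directional derivative `D_a f = Σᵢ aᵢ ∂f/∂xᵢ` of a polynomial. -/
noncomputable def dirDeriv {n : ℕ} (a : Fin n → ℝ) (f : MvPolynomial (Fin n) ℝ) :
    MvPolynomial (Fin n) ℝ :=
  ∑ i, a i • pderiv i f

/-- The gradient of a polynomial at a point. -/
noncomputable def polyGrad {n : ℕ} (f : MvPolynomial (Fin n) ℝ) (x : Fin n → ℝ) :
    Fin n → ℝ :=
  fun i => eval x (pderiv i f)

/-- The Hessian matrix of a polynomial at a point. -/
noncomputable def polyHess {n : ℕ} (f : MvPolynomial (Fin n) ℝ) (x : Fin n → ℝ) :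
    Matrix (Fin n) (Fin n) ℝ :=
  Matrix.of fun i j => eval x (pderiv i (pderiv j f))

/-- The Hessian of `log f` at `x`, namely `(f(x)·H_f(x) − ∇f(x)∇f(x)ᵀ)/f(x)²`. -/
noncomputable def logHess {n : ℕ} (f : MvPolynomial (Fin n) ℝ) (x : Fin n → ℝ) :
    Matrix (Fin n) (Fin n) ℝ :=
  ((eval x f) ^ 2)⁻¹ • ((eval x f) • polyHess f x -
    Matrix.vecMulVec (polyGrad f x) (polyGrad f x))

/-- `f` is log-concave at `x`: either `f = 0`, or `f(x) > 0` and the Hessian of `log f`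
at `x` is negative semidefinite. -/
def LogConcaveAt {n : ℕ} (f : MvPolynomial (Fin n) ℝ) (x : Fin n → ℝ) : Prop :=
  f = 0 ∨ (0 < eval x f ∧ (-(logHess f x)).PosSemidef)

/-- `f` is strictly log-concave at `x`: `f(x) > 0` and the Hessian of `log f` at `x` is
negative definite. -/
def StrictLogConcaveAt {n : ℕ} (f : MvPolynomial (Fin n) ℝ) (x : Fin n → ℝ) : Prop :=
  0 < eval x f ∧ (-(logHess f x)).PosDef

/-- The symmetric matrix `Q` of a quadratic form `q`, so that `q(x) = xᵀQx` when `q` is a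
homogeneous quadratic: `Q = (1/2)·H_q`. -/
noncomputable def polyQuadMatrix {n : ℕ} (q : MvPolynomial (Fin n) ℝ) :
    Matrix (Fin n) (Fin n) ℝ :=
  Matrix.of fun i j => (1 / 2) * eval 0 (pderiv i (pderiv j q))

/-- A form `f` of degree `d` is `K`-Lorentzian if for `d ≤ 1` it is nonnegative on `K`, and
for `d ≥ 2`, for all `a₁, …, a_{d-2}` in the interior of `K` the quadratic form
`D_{a₁} ⋯ D_{a_{d-2}} f` has a matrix with exactly one positive eigenvalue which is positive
as a bilinear form on the interior of `K`. -/
def IsKLorentzian {n : ℕ} (K : Set (Fin n → ℝ)) (d : ℕ) (f : MvPolynomial (Fin n) ℝ) :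
    Prop :=
  if d ≤ 1 then ∀ x ∈ K, 0 ≤ eval x f
  else ∀ L : List (Fin n → ℝ), L.length = d - 2 → (∀ v ∈ L, v ∈ interior K) →
    IsLorentzianMatrix K (polyQuadMatrix (L.foldr dirDeriv f))

/-- `f` lies in `iSL^d(K)`: `f` is `K`-Lorentzian and for all nonzero `a₁, …, a_{d-2} ∈ K`
the matrix `Q` of `D_{a₁} ⋯ D_{a_{d-2}} f` is nonsingular and satisfies `xᵀQy > 0` for all
nonzero `x, y ∈ K`. -/
def MemISL {n : ℕ} (K : Set (Fin n → ℝ)) (d : ℕ) (f : MvPolynomial (Fin n) ℝ) : Prop :=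
  IsKLorentzian K d f ∧
    ∀ L : List (Fin n → ℝ), L.length = d - 2 → (∀ v ∈ L, v ∈ K ∧ v ≠ 0) →
      (polyQuadMatrix (L.foldr dirDeriv f)).det ≠ 0 ∧
      ∀ x ∈ K, x ≠ 0 → ∀ y ∈ K, y ≠ 0 →
        0 < x ⬝ᵥ (polyQuadMatrix (L.foldr dirDeriv f) *ᵥ y)

/-- `f` of degree `d` is `K`-completely log-concave: for every `m ≤ d` and every
`a₁, …, a_m ∈ K`, the derivative `D_{a₁} ⋯ D_{a_m} f` is log-concave on the interior of `K`. -/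
def IsKCLC {n : ℕ} (K : Set (Fin n → ℝ)) (d : ℕ) (f : MvPolynomial (Fin n) ℝ) : Prop :=
  ∀ L : List (Fin n → ℝ), L.length ≤ d → (∀ v ∈ L, v ∈ K) →
    ∀ x ∈ interior K, LogConcaveAt (L.foldr dirDeriv f) x

/-- A matrix `A` is `K`-positive if `Ax` lies in the interior of `K` for every nonzero
`x ∈ K`. -/
def IsKPositive {n : ℕ} (K : Set (Fin n → ℝ)) (A : Matrix (Fin n) (Fin n) ℝ) : Prop :=
  ∀ x ∈ K, x ≠ 0 → A *ᵥ x ∈ interior K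


/-!
Fix directions `L` in `K` and a point `x ∈ int K`, write `g = D_L D_a f` and `h = D_L D_v f`,
both homogeneous of degree `m`, and let `B_g`, `B_h` be their Hessians at `x`. Differentiating
`m - 2` more times in the direction `x` turns `g`, `h` into quadratics with Hessians
`(m-2)! B_g`, `(m-2)! B_h`, so the hypotheses make `z ↦ B_g(z,z)` and `z ↦ B_h(z,z)` log-concave
on `int K`, and `B_g(v,v) ≥ 0` because the constant `D_v² D_x^(m-2) g` is log-concave.
Since `D_v D_z D_a = D_a D_z D_v`, `B_g(v,·) = B_h(a,·)`. Testing `B_g` at the interior points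
`v + t a` with `t → 0⁺` shows `B_g ≤ 0` on the hyperplane `B_g(v,·) = 0`, and `B_h ≤ 0` there
because `B_h(a,·)` vanishes on it. So `B_g + B_h` is negative semidefinite on a hyperplane and
positive at `x`, which forces the reverse Cauchy–Schwarz inequality `B(z,z) B(x,x) ≤ B(x,z)²`;
by Euler's identity this is the log-concavity of `g + h` at `x`.
-/

open scoped Pointwise in
theorem add_smul_mem_interior_of_cone {E : Type*} [AddCommGroup E] [Module ℝ E]
    [TopologicalSpace E] [IsTopologicalAddGroup E] [ContinuousSMul ℝ E] {K : Set E}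
    (hconv : Convex ℝ K) (hcone : ∀ c : ℝ, 0 ≤ c → ∀ x ∈ K, c • x ∈ K) {v a : E} (hv : v ∈ K)
    (ha : a ∈ interior K) {t : ℝ} (ht : 0 < t) : v + t • a ∈ interior K := by
  have hc : 0 < 1 + t := by linarith
  have hmem : (1 + t)⁻¹ • v + (t / (1 + t)) • a ∈ interior K :=
    hconv.combo_self_interior_mem_interior hv ha (by positivity) (by positivity)
      (by field_simp)
  have hscale : (1 + t) • interior K ⊆ interior K := by
    rw [← interior_smul₀ hc.ne']
    exact interior_mono (Set.smul_set_subset_iff.2 fun x hx => hcone _ hc.le x hx)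
  convert hscale (Set.smul_mem_smul_set hmem) using 1
  rw [smul_add, smul_smul, smul_smul, mul_inv_cancel₀ hc.ne', one_smul, mul_div_cancel₀ _ hc.ne']

namespace LinearMap.BilinForm

open Filter Topology

variable {E : Type*} [AddCommGroup E] [Module ℝ E] {B : LinearMap.BilinForm ℝ E}

/-- Log-concavity of `q w = B w w` at `y`: `q y * D_z² q ≤ (D_z q y)²` reads
`B y y * B z z ≤ 2 * B y z ^ 2`. -/
def QuadLogConcaveAt (B : LinearMap.BilinForm ℝ E) (y : E) : Prop :=
  0 < B y y ∧ ∀ z, B y y * B z z ≤ 2 * B y z ^ 2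

theorem QuadLogConcaveAt.of_smul {c : ℝ} (hc : 0 < c) {y : E}
    (h : (c • B).QuadLogConcaveAt y) : B.QuadLogConcaveAt y := by
  simp only [QuadLogConcaveAt, smul_apply, smul_eq_mul] at h
  refine ⟨pos_of_mul_pos_right h.1 hc.le, fun z => ?_⟩
  have := h.2 z
  have hc2 : 0 < c * c := mul_pos hc hc
  nlinarith

namespace IsSymm

variable (hB : B.IsSymm)
include hB

theorem apply_self_nonpos_of_apply_eq_zero (ℓ : E →ₗ[ℝ] ℝ)
    (hker : ∀ z, ℓ z = 0 → B z z ≤ 0) {x z : E} (hx : 0 < B x x) (hz : B x z = 0) :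
    B z z ≤ 0 := by
  by_cases hℓz : ℓ z = 0
  · exact hker z hℓz
  have hw := hker (ℓ z • x - ℓ x • z) (by simp [mul_comm])
  have hexp : B (ℓ z • x - ℓ x • z) (ℓ z • x - ℓ x • z)
      = ℓ z ^ 2 * B x x + ℓ x ^ 2 * B z z := by
    simp only [map_sub, map_smul, LinearMap.sub_apply, LinearMap.smul_apply, smul_eq_mul,
      hB.eq z x, hz]
    ring
  have : 0 < ℓ z ^ 2 * B x x := mul_pos (by positivity) hx
  nlinarith [sq_nonneg (ℓ x)]

theorem apply_self_mul_le_sq {x : E} (hx : 0 < B x x)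
    (hker : ∀ z, B x z = 0 → B z z ≤ 0) (z : E) : B z z * B x x ≤ B x z ^ 2 := by
  set t := B x z / B x x
  have hr : B x (z - t • x) = 0 := by
    simp only [map_sub, map_smul, smul_eq_mul, t]
    field_simp
    ring
  have hexp : B z z = B (z - t • x) (z - t • x) + t ^ 2 * B x x + 2 * t * B x (z - t • x) := by
    simp only [map_sub, map_smul, LinearMap.sub_apply, LinearMap.smul_apply, smul_eq_mul,
      hB.eq z x]
    ring
  calc B z z * B x x = B (z - t • x) (z - t • x) * B x x + (t * B x x) ^ 2 := by
        rw [hexp, hr]; ring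
    _ ≤ (t * B x x) ^ 2 := add_le_of_nonpos_left (mul_nonpos_of_nonpos_of_nonneg (hker _ hr) hx.le)
    _ = B x z ^ 2 := by rw [div_mul_cancel₀ _ hx.ne']

theorem apply_self_nonpos_of_quadLogConcaveAt {v a : E}
    (hray : ∀ t : ℝ, 0 < t → B.QuadLogConcaveAt (v + t • a)) (hvv : 0 ≤ B v v)
    (hva : 0 < B v a) {z : E} (hz : B v z = 0) : B z z ≤ 0 := by
  by_contra! hzz
  set k := 2 * B a z ^ 2 - B a a * B z z
  have hbound : ∀ t : ℝ, 0 < t → 2 * B v a * B z z ≤ t * k := fun t ht => by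
    have h := (hray t ht).2 z
    simp only [map_add, map_smul, LinearMap.add_apply, LinearMap.smul_apply, smul_eq_mul,
      hB.eq a v, hz] at h
    have : t * (2 * B v a * B z z) ≤ t * (t * k) := by nlinarith [mul_nonneg hvv hzz.le]
    exact le_of_mul_le_mul_left this ht
  have hlim : Tendsto (fun t : ℝ => t * k) (𝓝[>] 0) (𝓝 0) := by
    simpa using ((continuous_mul_const k).tendsto 0).mono_left nhdsWithin_le_nhds
  have := ge_of_tendsto hlim (eventually_nhdsWithin_of_forall hbound)
  nlinarith [mul_pos hva hzz]

end IsSymm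

theorem add_apply_self_mul_le_sq {Bg Bh : LinearMap.BilinForm ℝ E} (hg : Bg.IsSymm)
    (hh : Bh.IsSymm) {v a x : E} (hray : ∀ t : ℝ, 0 < t → Bg.QuadLogConcaveAt (v + t • a))
    (hvv : 0 ≤ Bg v v) (ha : Bh.QuadLogConcaveAt a) (hlink : ∀ z, Bg v z = Bh a z)
    (hx : 0 < (Bg + Bh) x x) (z : E) :
    (Bg + Bh) z z * (Bg + Bh) x x ≤ (Bg + Bh) x z ^ 2 := by
  have hker : ∀ z, Bg v z = 0 → (Bg + Bh) z z ≤ 0 := fun z hz => by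
    have hBg : Bg z z ≤ 0 :=
      hg.apply_self_nonpos_of_quadLogConcaveAt hray hvv (hlink a ▸ ha.1) hz
    have hBh : Bh z z ≤ 0 := by
      have h := ha.2 z
      rw [← hlink z, hz] at h
      nlinarith [ha.1]
    simpa using add_nonpos hBg hBh
  exact (hg.add hh).apply_self_mul_le_sq hx
    (fun _ => (hg.add hh).apply_self_nonpos_of_apply_eq_zero (Bg v) hker hx) z

end LinearMap.BilinForm

theorem MvPolynomial.pderiv_pderiv_comm {σ R : Type*} [CommSemiring R] (i j : σ)
    (p : MvPolynomial σ R) : pderiv i (pderiv j p) = pderiv j (pderiv i p) := by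
  classical
  induction p using MvPolynomial.induction_on with
  | C a => simp
  | add p q hp hq => simp [hp, hq]
  | mul_X p k hp =>
    simp only [pderiv_mul, map_add, pderiv_X, hp, Pi.single_apply]
    split_ifs <;> simp [add_right_comm]

section DirDeriv

variable {n m : ℕ} {p : MvPolynomial (Fin n) ℝ}

theorem eval_dirDeriv (x a : Fin n → ℝ) (p : MvPolynomial (Fin n) ℝ) :
    eval x (dirDeriv a p) = ∑ i, a i * eval x (pderiv i p) := by
  simp [dirDeriv, smul_eq_C_mul]

theorem dirDeriv_add_left (a b : Fin n → ℝ) (p : MvPolynomial (Fin n) ℝ) :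
    dirDeriv (a + b) p = dirDeriv a p + dirDeriv b p := by
  simp [dirDeriv, add_smul, Finset.sum_add_distrib]

theorem dirDeriv_add_right (a : Fin n → ℝ) (p q : MvPolynomial (Fin n) ℝ) :
    dirDeriv a (p + q) = dirDeriv a p + dirDeriv a q := by
  simp [dirDeriv, Finset.sum_add_distrib]

theorem dirDeriv_C (a : Fin n → ℝ) (c : ℝ) : dirDeriv a (C c) = 0 := by
  simp [dirDeriv]

theorem dirDeriv_comm (a b : Fin n → ℝ) (p : MvPolynomial (Fin n) ℝ) :
    dirDeriv a (dirDeriv b p) = dirDeriv b (dirDeriv a p) := by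
  simp only [dirDeriv, map_sum, Derivation.map_smul, Finset.smul_sum]
  rw [Finset.sum_comm]
  exact Finset.sum_congr rfl fun i _ => Finset.sum_congr rfl fun j _ => by
    rw [smul_comm, pderiv_pderiv_comm]

theorem foldr_dirDeriv_comm (L : List (Fin n → ℝ)) (a : Fin n → ℝ)
    (p : MvPolynomial (Fin n) ℝ) :
    L.foldr dirDeriv (dirDeriv a p) = dirDeriv a (L.foldr dirDeriv p) := by
  induction L with
  | nil => rfl
  | cons b L ih => simp [ih, dirDeriv_comm]

theorem isHomogeneous_dirDeriv (hp : p.IsHomogeneous m) (a : Fin n → ℝ) :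
    (dirDeriv a p).IsHomogeneous (m - 1) :=
  IsHomogeneous.sum _ _ _ fun i _ => by
    rw [smul_eq_C_mul]
    exact (hp.pderiv (i := i)).C_mul (a i)

end DirDeriv

namespace MvPolynomial.IsHomogeneous

variable {n m : ℕ} {p : MvPolynomial (Fin n) ℝ}

theorem eq_C_eval (hp : p.IsHomogeneous 0) (x : Fin n → ℝ) : p = C (eval x p) := by
  rw [← totalDegree_zero_iff_isHomogeneous, totalDegree_eq_zero_iff_eq_C] at hp
  rw [hp, eval_C]

theorem foldr_dirDeriv (hp : p.IsHomogeneous m) (L : List (Fin n → ℝ)) :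
    (L.foldr dirDeriv p).IsHomogeneous (m - L.length) := by
  induction L with
  | nil => simpa using hp
  | cons b L ih => simpa [Nat.sub_add_eq] using isHomogeneous_dirDeriv ih b

theorem eval_dirDeriv_self (hp : p.IsHomogeneous m) (x : Fin n → ℝ) :
    eval x (dirDeriv x p) = m * eval x p := by
  simpa [eval_dirDeriv, map_sum] using congrArg (eval x) hp.sum_X_mul_pderiv

theorem eval_foldr_replicate_self (hp : p.IsHomogeneous m) (x : Fin n → ℝ) (s : ℕ) :
    eval x ((List.replicate s x).foldr dirDeriv p) = m.descFactorial s * eval x p := by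
  induction s with
  | zero => simp
  | succ s ih =>
    rw [List.replicate_succ, List.foldr_cons, (hp.foldr_dirDeriv _).eval_dirDeriv_self x, ih,
      List.length_replicate, Nat.descFactorial_succ, Nat.cast_mul, mul_assoc]

theorem foldr_replicate_self_eq_C (hp : p.IsHomogeneous m) (x : Fin n → ℝ) :
    (List.replicate m x).foldr dirDeriv p = C (m.factorial * eval x p) := by
  have h0 : ((List.replicate m x).foldr dirDeriv p).IsHomogeneous 0 := by
    simpa using hp.foldr_dirDeriv (List.replicate m x)
  rw [h0.eq_C_eval x, hp.eval_foldr_replicate_self, Nat.descFactorial_self]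

end MvPolynomial.IsHomogeneous

section HessForm

variable {n m : ℕ} {p : MvPolynomial (Fin n) ℝ} {x : Fin n → ℝ}

noncomputable def hessForm (p : MvPolynomial (Fin n) ℝ) (x : Fin n → ℝ) :
    LinearMap.BilinForm ℝ (Fin n → ℝ) :=
  Matrix.toBilin' (polyHess p x)

theorem hessForm_apply (p : MvPolynomial (Fin n) ℝ) (x z w : Fin n → ℝ) :
    hessForm p x z w = eval x (dirDeriv z (dirDeriv w p)) := by
  simp only [hessForm, Matrix.toBilin'_apply', dirDeriv, map_sum, smul_eq_C_mul, pderiv_C_mul,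
    eval_mul, eval_C, dotProduct, Matrix.mulVec, polyHess, Matrix.of_apply, Finset.mul_sum]
  exact Finset.sum_congr rfl fun i _ => Finset.sum_congr rfl fun j _ => by ring

theorem hessForm_isSymm (p : MvPolynomial (Fin n) ℝ) (x : Fin n → ℝ) : (hessForm p x).IsSymm :=
  ⟨fun z w => by rw [hessForm_apply, hessForm_apply, dirDeriv_comm]⟩

theorem hessForm_add (p q : MvPolynomial (Fin n) ℝ) (x : Fin n → ℝ) :
    hessForm (p + q) x = hessForm p x + hessForm q x := by
  refine LinearMap.ext₂ fun z w => ?_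
  simp [hessForm_apply, dirDeriv_add_right]

theorem hessForm_eq_zero_of_isHomogeneous (hp : p.IsHomogeneous m) (hm : m ≤ 1)
    (x : Fin n → ℝ) : hessForm p x = 0 := by
  refine LinearMap.ext₂ fun z w => ?_
  have h0 : (dirDeriv w p).IsHomogeneous 0 := by
    simpa [Nat.sub_eq_zero_of_le hm] using isHomogeneous_dirDeriv hp w
  rw [hessForm_apply, h0.eq_C_eval x, dirDeriv_C]
  simp

theorem MvPolynomial.IsHomogeneous.hessForm_self_left (hp : p.IsHomogeneous (m + 1))
    (x z : Fin n → ℝ) : hessForm p x x z = m * eval x (dirDeriv z p) := by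
  rw [hessForm_apply, (isHomogeneous_dirDeriv hp z).eval_dirDeriv_self, Nat.add_sub_cancel]

theorem dotProduct_neg_logHess_mulVec (p : MvPolynomial (Fin n) ℝ) (x u : Fin n → ℝ) :
    u ⬝ᵥ (-(logHess p x) *ᵥ u)
      = ((eval x p) ^ 2)⁻¹ * (eval x (dirDeriv u p) ^ 2 - eval x p * hessForm p x u u) := by
  have hgrad : polyGrad p x ⬝ᵥ u = eval x (dirDeriv u p) := by
    simp [polyGrad, eval_dirDeriv, dotProduct, mul_comm]
  rw [logHess, Matrix.neg_mulVec, dotProduct_neg, Matrix.smul_mulVec, dotProduct_smul,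
    Matrix.sub_mulVec, dotProduct_sub, Matrix.smul_mulVec, dotProduct_smul,
    Matrix.vecMulVec_mulVec, dotProduct_smul, hgrad, ← Matrix.toBilin'_apply', ← hessForm,
    dotProduct_comm, hgrad]
  simp only [smul_eq_mul, op_smul_eq_mul]
  ring

theorem neg_logHess_isHermitian (p : MvPolynomial (Fin n) ℝ) (x : Fin n → ℝ) :
    (-(logHess p x)).IsHermitian := by
  refine Matrix.IsHermitian.neg (Matrix.IsHermitian.ext fun i j => ?_)
  simp only [logHess, polyHess, polyGrad, Matrix.smul_apply, Matrix.sub_apply,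
    Matrix.vecMulVec_apply, Matrix.of_apply, smul_eq_mul, star_trivial, pderiv_pderiv_comm]
  ring

theorem logConcaveAt_iff_of_ne_zero (hp : p ≠ 0) :
    LogConcaveAt p x ↔
      0 < eval x p ∧ ∀ u, eval x p * hessForm p x u u ≤ eval x (dirDeriv u p) ^ 2 := by
  simp only [LogConcaveAt, hp, false_or, Matrix.posSemidef_iff_dotProduct_mulVec,
    neg_logHess_isHermitian, true_and, star_trivial, dotProduct_neg_logHess_mulVec]
  refine and_congr_right fun hpos => forall_congr' fun u => ?_
  rw [mul_nonneg_iff_of_pos_left (by positivity), sub_nonneg]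

theorem nonneg_of_logConcaveAt_C {c : ℝ} (h : LogConcaveAt (C c : MvPolynomial (Fin n) ℝ) x) :
    0 ≤ c := by
  rcases h with h | ⟨h, -⟩
  · exact (C_eq_zero.mp h).ge
  · simpa using h.le

end HessForm

namespace MvPolynomial.IsHomogeneous

variable {n m : ℕ} {g : MvPolynomial (Fin n) ℝ} {x y : Fin n → ℝ}

theorem quadLogConcaveAt_hessForm (hg : g.IsHomogeneous 2) (hg0 : g ≠ 0)
    (h : LogConcaveAt g y) : (hessForm g y).QuadLogConcaveAt y := by
  obtain ⟨hpos, hle⟩ := (logConcaveAt_iff_of_ne_zero hg0).1 h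
  have hyz : ∀ z, hessForm g y y z = eval y (dirDeriv z g) := fun z => by
    simpa using hg.hessForm_self_left y z
  have hyy : hessForm g y y y = 2 * eval y g := by
    rw [hyz, hg.eval_dirDeriv_self, Nat.cast_ofNat]
  refine ⟨by rw [hyy]; positivity, fun z => ?_⟩
  rw [hyy, hyz, mul_assoc]
  exact mul_le_mul_of_nonneg_left (hle z) zero_le_two

theorem dirDeriv_dirDeriv_foldr_replicate (hg : g.IsHomogeneous (m + 2)) (x z w : Fin n → ℝ) :
    dirDeriv z (dirDeriv w ((List.replicate m x).foldr dirDeriv g))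
      = C (m.factorial * hessForm g x z w) := by
  have hzw : (dirDeriv z (dirDeriv w g)).IsHomogeneous m := by
    simpa using isHomogeneous_dirDeriv (isHomogeneous_dirDeriv hg w) z
  rw [← foldr_dirDeriv_comm, ← foldr_dirDeriv_comm, hzw.foldr_replicate_self_eq_C x,
    hessForm_apply]

theorem mul_hessForm_le_sq (hg : g.IsHomogeneous (m + 2)) {u : Fin n → ℝ}
    (hsq : hessForm g x u u * hessForm g x x x ≤ hessForm g x x u ^ 2) :
    eval x g * hessForm g x u u ≤ eval x (dirDeriv u g) ^ 2 := by
  rw [hg.hessForm_self_left, hg.hessForm_self_left, hg.eval_dirDeriv_self] at hsq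
  push_cast at hsq
  have h1 : (m + 2) * (eval x g * hessForm g x u u) ≤ (m + 1) * eval x (dirDeriv u g) ^ 2 :=
    le_of_mul_le_mul_left (by linarith) (by positivity : (0 : ℝ) < m + 1)
  refine le_of_mul_le_mul_left (h1.trans ?_) (by positivity : (0 : ℝ) < m + 2)
  linarith [sq_nonneg (eval x (dirDeriv u g))]

end MvPolynomial.IsHomogeneous

section KCLC

open LinearMap.BilinForm

variable {n m : ℕ} {K : Set (Fin n → ℝ)} {g : MvPolynomial (Fin n) ℝ} {x y : Fin n → ℝ}

theorem IsKCLC.foldr {d : ℕ} {p : MvPolynomial (Fin n) ℝ} (h : IsKCLC K d p)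
    {L : List (Fin n → ℝ)} (hL : L.length ≤ d) (hLK : ∀ w ∈ L, w ∈ K) :
    IsKCLC K (d - L.length) (L.foldr dirDeriv p) := by
  intro L' hL' hL'K x hx
  rw [← List.foldr_append]
  refine h (L' ++ L) (by simp; omega) (fun w hw => ?_) x hx
  rcases List.mem_append.1 hw with hw | hw
  exacts [hL'K w hw, hLK w hw]

theorem IsKCLC.quadLogConcaveAt_hessForm (hK : IsKCLC K (m + 2) g)
    (hg : g.IsHomogeneous (m + 2)) (hx : x ∈ K) (hgx : eval x g ≠ 0) (hy : y ∈ interior K) :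
    (hessForm g x).QuadLogConcaveAt y := by
  have h := hK (List.replicate m x) (by simp) (fun w hw => List.eq_of_mem_replicate hw ▸ hx) y hy
  have hq : ((List.replicate m x).foldr dirDeriv g).IsHomogeneous 2 := by
    simpa using hg.foldr_dirDeriv (List.replicate m x)
  have hq0 : (List.replicate m x).foldr dirDeriv g ≠ 0 := fun h0 => by
    have := hg.eval_foldr_replicate_self x m
    rw [h0, map_zero] at this
    exact hgx (by simpa [Nat.descFactorial_eq_zero_iff_lt] using this.symm)
  have hform : hessForm ((List.replicate m x).foldr dirDeriv g) y
      = (m.factorial : ℝ) • hessForm g x := by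
    refine LinearMap.ext₂ fun z w => ?_
    simp [hessForm_apply, hg.dirDeriv_dirDeriv_foldr_replicate]
  exact QuadLogConcaveAt.of_smul (by positivity) (hform ▸ hq.quadLogConcaveAt_hessForm hq0 h)

theorem IsKCLC.hessForm_self_nonneg (hK : IsKCLC K (m + 2) g) (hg : g.IsHomogeneous (m + 2))
    (hx : x ∈ K) {v : Fin n → ℝ} (hv : v ∈ K) (hy : y ∈ interior K) : 0 ≤ hessForm g x v v := by
  have h := hK (v :: v :: List.replicate m x) (by simp) (by
    simp only [List.mem_cons, List.mem_replicate]
    rintro w (rfl | rfl | ⟨-, rfl⟩) <;> assumption) y hy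
  rw [List.foldr_cons, List.foldr_cons, hg.dirDeriv_dirDeriv_foldr_replicate] at h
  exact nonneg_of_mul_nonneg_right (nonneg_of_logConcaveAt_C h) (by positivity)

theorem IsKCLC.hessForm_add_apply_self_mul_le_sq (hconv : Convex ℝ K)
    (hcone : ∀ c : ℝ, 0 ≤ c → ∀ x ∈ K, c • x ∈ K) {h : MvPolynomial (Fin n) ℝ}
    (hgK : IsKCLC K (m + 2) g) (hhK : IsKCLC K (m + 2) h) (hg : g.IsHomogeneous (m + 2))
    (hh : h.IsHomogeneous (m + 2)) (hgx : 0 < eval x g) (hhx : 0 < eval x h)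
    (hx : x ∈ interior K) {a v : Fin n → ℝ} (ha : a ∈ interior K) (hv : v ∈ K)
    (hlink : ∀ z, hessForm g x v z = hessForm h x a z) (u : Fin n → ℝ) :
    hessForm (g + h) x u u * hessForm (g + h) x x x ≤ hessForm (g + h) x x u ^ 2 := by
  have hxK := interior_subset hx
  rw [hessForm_add]
  exact add_apply_self_mul_le_sq (hessForm_isSymm g x) (hessForm_isSymm h x)
    (fun t ht => hgK.quadLogConcaveAt_hessForm hg hxK hgx.ne'
      (add_smul_mem_interior_of_cone hconv hcone hv ha ht))
    (hgK.hessForm_self_nonneg hg hxK hv hx)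
    (hhK.quadLogConcaveAt_hessForm hh hxK hhx.ne' ha) hlink
    (add_pos (hgK.quadLogConcaveAt_hessForm hg hxK hgx.ne' hx).1
      (hhK.quadLogConcaveAt_hessForm hh hxK hhx.ne' hx).1) u

end KCLC

theorem logConcaveAt_dirDeriv_add {n m : ℕ} {K : Set (Fin n → ℝ)} (hconv : Convex ℝ K)
    (hcone : ∀ c : ℝ, 0 ≤ c → ∀ x ∈ K, c • x ∈ K) {F : MvPolynomial (Fin n) ℝ}
    (hF : F.IsHomogeneous (m + 1)) {a v x : Fin n → ℝ} (ha : a ∈ interior K) (hv : v ∈ K)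
    (haF : IsKCLC K m (dirDeriv a F)) (hvF : IsKCLC K m (dirDeriv v F))
    (hx : x ∈ interior K) : LogConcaveAt (dirDeriv (a + v) F) x := by
  have hlc : ∀ {p}, IsKCLC K m p → LogConcaveAt p x := fun hp => hp [] (by simp) (by simp) x hx
  rw [dirDeriv_add_left]
  set g := dirDeriv a F
  set h := dirDeriv v F
  have hg : g.IsHomogeneous m := by simpa using isHomogeneous_dirDeriv hF a
  have hh : h.IsHomogeneous m := by simpa using isHomogeneous_dirDeriv hF v
  rcases eq_or_ne g 0 with hg0 | hg0
  · simpa [hg0] using hlc hvF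
  rcases eq_or_ne h 0 with hh0 | hh0
  · simpa [hh0] using hlc haF
  have hgx := ((logConcaveAt_iff_of_ne_zero hg0).1 (hlc haF)).1
  have hhx := ((logConcaveAt_iff_of_ne_zero hh0).1 (hlc hvF)).1
  have hpos : 0 < eval x (g + h) := by rw [map_add]; positivity
  refine (logConcaveAt_iff_of_ne_zero fun h0 => by simp [h0] at hpos).2 ⟨hpos, fun u => ?_⟩
  obtain hm | ⟨k, rfl⟩ : m ≤ 1 ∨ ∃ k, m = k + 2 := by
    rcases le_or_gt m 1 with hm | hm
    exacts [.inl hm, .inr ⟨m - 2, by omega⟩]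
  · rw [hessForm_eq_zero_of_isHomogeneous (hg.add hh) hm, LinearMap.zero_apply,
      LinearMap.zero_apply, mul_zero]
    positivity
  have hlink : ∀ z, hessForm g x v z = hessForm h x a z := fun z => by
    simp only [hessForm_apply, g, h]
    rw [dirDeriv_comm z a, dirDeriv_comm v a, dirDeriv_comm v z]
  exact (hg.add hh).mul_hessForm_le_sq
    (haF.hessForm_add_apply_self_mul_le_sq hconv hcone hvF hg hh hgx hhx hx ha hv hlink u)

/-- Let `f` be a real homogeneous polynomial of degree `d ≥ 2`, `K ⊆ ℝⁿ`
a proper convex cone, `a` a point in the interior of `K`, and `v` a vector spanning an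
extreme ray of `K`. If `D_a f` and `D_v f` are both `K`-completely log-concave, then
`D_{a+v} f` is `K`-completely log-concave. -/
theorem stmt18 {n : ℕ} (K : Set (Fin n → ℝ)) (hK : IsProperCone K) (d : ℕ) (hd : 2 ≤ d)
    (f : MvPolynomial (Fin n) ℝ) (hf : f.IsHomogeneous d)
    (a : Fin n → ℝ) (ha : a ∈ interior K) (v : Fin n → ℝ) (hv : SpansExtremeRay K v)
    (haf : IsKCLC K (d - 1) (dirDeriv a f)) (hvf : IsKCLC K (d - 1) (dirDeriv v f)) :
    IsKCLC K (d - 1) (dirDeriv (a + v) f) := by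
  intro L hL hLK x hx
  have hF : (L.foldr dirDeriv f).IsHomogeneous (d - 1 - L.length + 1) := by
    convert hf.foldr_dirDeriv L using 1
    omega
  rw [foldr_dirDeriv_comm]
  refine logConcaveAt_dirDeriv_add hK.1 hK.2.1 hF ha hv.1 ?_ ?_ hx
  · simpa only [foldr_dirDeriv_comm] using haf.foldr hL hLK
  · simpa only [foldr_dirDeriv_comm] using hvf.foldr hL hLK
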